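/- Let β̂ := σᵤ/√(ΔΣ₀). Then T(β̂) = β̂, T is differentiable at β̂, and T′(β̂) = 0; that is, β̂ is a super-attractive fixed point of T. -/

import Mathlib

/-!
After cancelling `Δ Σ₀`, the policy-iteration map is Heron's iteration
`β ↦ (β + c / β) / 2` with `c = σᵤ² / (Δ Σ₀)`, i.e. Newton's method for `β² = c`.
Its derivative `(1 - c / β²) / 2` vanishes exactly where `β² = c`, which is where
`β` is fixed; `β̂` is such a point.
-/

/-- The one-period policy-iteration map `T(β) = (β² Sig0 Δ + σu²)/(2 Δ β Sig0)`. -/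
noncomputable def T1p (Δ σu Sig0 β : ℝ) : ℝ :=
  (β ^ 2 * Sig0 * Δ + σu ^ 2) / (2 * Δ * β * Sig0)

section Heron

variable {𝕜 : Type*}

def heronStep [Field 𝕜] (c x : 𝕜) : 𝕜 :=
  (x + c / x) / 2

theorem heronStep_eq_self [Field 𝕜] [NeZero (2 : 𝕜)] {c x : 𝕜} (hx : x ^ 2 = c) :
    heronStep c x = x := by
  have hcx : c / x = x := by
    rw [← hx, sq]
    rcases eq_or_ne x 0 with rfl | hx0
    · simp
    · exact mul_div_cancel_right₀ x hx0
  rw [heronStep, hcx, ← two_mul, mul_div_cancel_left₀ x two_ne_zero]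

theorem hasDerivAt_heronStep [NontriviallyNormedField 𝕜] (c : 𝕜) {x : 𝕜} (hx : x ≠ 0) :
    HasDerivAt (heronStep c) ((1 - c / x ^ 2) / 2) x := by
  have h : HasDerivAt (fun y => (y + c * y⁻¹) / 2) ((1 + c * -(x ^ 2)⁻¹) / 2) x :=
    ((hasDerivAt_id' x).add ((hasDerivAt_inv hx).const_mul c)).div_const 2
  have hf : heronStep c = fun y => (y + c * y⁻¹) / 2 := by
    funext y
    rw [heronStep, div_eq_mul_inv c y]
  rw [hf]
  exact h.congr_deriv (by ring)

theorem hasDerivAt_heronStep_of_sq_eq [NontriviallyNormedField 𝕜] {c x : 𝕜} (hx0 : x ≠ 0)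
    (hx : x ^ 2 = c) : HasDerivAt (heronStep c) 0 x := by
  subst hx
  have h := hasDerivAt_heronStep (x ^ 2) hx0
  rwa [div_self (pow_ne_zero 2 hx0), sub_self, zero_div] at h

end Heron

theorem T1p_eq_heronStep {Δ Sig0 : ℝ} (hΔ : Δ ≠ 0) (hSig : Sig0 ≠ 0) (σu : ℝ) :
    T1p Δ σu Sig0 = heronStep (σu ^ 2 / (Δ * Sig0)) := by
  funext β
  rcases eq_or_ne β 0 with rfl | hβ
  · -- both sides are `_ / 0 = 0`
    simp [T1p, heronStep]
  · rw [T1p, heronStep]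
    field_simp

/-- With `β̂ := σu/√(Δ Sig0)` one has `T(β̂) = β̂` and `T` is differentiable at `β̂`
with `T'(β̂) = 0`; i.e. `β̂` is a super-attractive fixed point of `T`. -/
theorem one_period_super_attractive (Δ σu Sig0 : ℝ) (hΔ : 0 < Δ) (hσ : 0 < σu)
    (hSig : 0 < Sig0) :
    T1p Δ σu Sig0 (σu / Real.sqrt (Δ * Sig0)) = σu / Real.sqrt (Δ * Sig0) ∧
    HasDerivAt (T1p Δ σu Sig0) 0 (σu / Real.sqrt (Δ * Sig0)) := by
  have hΔSig : 0 < Δ * Sig0 := mul_pos hΔ hSig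
  have hsq : (σu / Real.sqrt (Δ * Sig0)) ^ 2 = σu ^ 2 / (Δ * Sig0) := by
    rw [div_pow, Real.sq_sqrt hΔSig.le]
  have hne : σu / Real.sqrt (Δ * Sig0) ≠ 0 :=
    div_ne_zero hσ.ne' (Real.sqrt_pos.2 hΔSig).ne'
  rw [T1p_eq_heronStep hΔ.ne' hSig.ne']
  exact ⟨heronStep_eq_self hsq, hasDerivAt_heronStep_of_sq_eq hne hsq⟩
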